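/- Let d_T and d_w (w ∈ W) be nonnegative functions of pairs v₁, v₂ such that d_T(v₁,v₂) + 1 ≥ |{w : d_w(v₁,v₂) ≥ κ}| + |{w : 0 < d_w(v₁,v₂) < κ}| for a fixed κ > 0 (only finitely many w have d_w(v₁,v₂) > 0). Then d_T(v₁,v₂) + Σ_w d_w(v₁,v₂) ≤ (κ+1)([d_T(v₁,v₂)]_κ + Σ_w [d_w(v₁,v₂)]_κ) + κ² + 2κ, where [A]_κ = A if A ≥ κ and 0 otherwise. -/

import Mathlib

/-!
Split the `w` with `d_w > 0` into those with `d_w ≥ κ`, where the truncation changes nothing, and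
those with `0 < d_w < κ`, each contributing less than `κ`. There are at most `d_T + 1` of the
latter, so they add at most `κ (d_T + 1)`; together with `d_T ≤ [d_T]_κ + κ` this gives the bound.
-/

/-- Truncation: [A]_κ = A if A ≥ κ, else 0. -/
noncomputable def trunc (A κ : ℝ) : ℝ := if κ ≤ A then A else 0

open Finset

lemma trunc_nonneg {A κ : ℝ} (hκ : 0 ≤ κ) : 0 ≤ trunc A κ := by
  unfold trunc
  split_ifs with h
  exacts [hκ.trans h, le_rfl]

lemma trunc_eq_zero_of_lt {A κ : ℝ} (h : A < κ) : trunc A κ = 0 :=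
  if_neg h.not_ge

lemma le_trunc_add_ite (A κ : ℝ) : A ≤ trunc A κ + if A < κ then κ else 0 := by
  unfold trunc
  split_ifs <;> linarith

lemma le_trunc_add {A κ : ℝ} (hκ : 0 ≤ κ) : A ≤ trunc A κ + κ := by
  have := le_trunc_add_ite A κ
  split_ifs at this <;> linarith

lemma Finset.sum_le_sum_trunc_add_card_mul {ι : Type*} (s : Finset ι) (f : ι → ℝ) (κ : ℝ) :
    ∑ i ∈ s, f i ≤ ∑ i ∈ s, trunc (f i) κ + #{i ∈ s | f i < κ} * κ := by
  calc ∑ i ∈ s, f i ≤ ∑ i ∈ s, (trunc (f i) κ + if f i < κ then κ else 0) :=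
        sum_le_sum fun i _ ↦ le_trunc_add_ite (f i) κ
    _ = ∑ i ∈ s, trunc (f i) κ + #{i ∈ s | f i < κ} * κ := by
        rw [sum_add_distrib, sum_ite, sum_const_zero, add_zero, sum_const, nsmul_eq_mul]

theorem truncated_distance_sum_bound_general (W : Type*) (dT : ℝ) (dw : W → ℝ) (κ : ℝ)
    (hκ : 0 < κ) (hdw : ∀ w, 0 ≤ dw w)
    (hfin : {w : W | 0 < dw w}.Finite)
    (hcount : ({w : W | κ ≤ dw w}.ncard : ℝ) + ({w : W | 0 < dw w ∧ dw w < κ}.ncard : ℝ)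
      ≤ dT + 1) :
    dT + ∑' w, dw w ≤
      (κ + 1) * (trunc dT κ + ∑' w, trunc (dw w) κ) + κ ^ 2 + 2 * κ := by
  classical
  set s := hfin.toFinset
  have hzero : ∀ w ∉ s, dw w = 0 := fun w hw ↦
    ((hdw w).lt_or_eq.resolve_left fun h ↦ hw (hfin.mem_toFinset.2 h)).symm
  have hsum : ∑' w, dw w = ∑ w ∈ s, dw w := tsum_eq_sum hzero
  have htsum : ∑' w, trunc (dw w) κ = ∑ w ∈ s, trunc (dw w) κ :=
    tsum_eq_sum fun w hw ↦ trunc_eq_zero_of_lt (hzero w hw ▸ hκ)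
  have hsmall : {w : W | 0 < dw w ∧ dw w < κ}.ncard = #{w ∈ s | dw w < κ} := by
    rw [← Set.ncard_coe_finset]
    congr
    ext w
    simp [s]
  have hcard : (#{w ∈ s | dw w < κ} : ℝ) ≤ dT + 1 := by
    have := Nat.cast_nonneg (α := ℝ) {w : W | κ ≤ dw w}.ncard
    rw [hsmall] at hcount
    linarith
  have htrunc_nonneg : 0 ≤ ∑ w ∈ s, trunc (dw w) κ := sum_nonneg fun w _ ↦ trunc_nonneg hκ.le
  rw [hsum, htsum]
  linarith [s.sum_le_sum_trunc_add_card_mul dw κ, mul_le_mul_of_nonneg_left hcard hκ.le,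
    mul_le_mul_of_nonneg_left (le_trunc_add (A := dT) hκ.le) (by linarith : 0 ≤ κ + 1),
    mul_nonneg hκ.le htrunc_nonneg]

/-- Lemma 5.2: if the number of w with d_w > 0 is at most d_T + 1, then
    d_T + Σ d_w ≤ (κ+1)([d_T]_κ + Σ [d_w]_κ) + κ² + 2κ. -/
theorem truncated_distance_sum_bound (W : Type*) (dT : ℝ) (dw : W → ℝ) (κ : ℝ)
    (hκ : 0 < κ) (hdT : 0 ≤ dT) (hdw : ∀ w, 0 ≤ dw w)
    (hfin : {w : W | 0 < dw w}.Finite)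
    (hcount : ({w : W | κ ≤ dw w}.ncard : ℝ) + ({w : W | 0 < dw w ∧ dw w < κ}.ncard : ℝ)
      ≤ dT + 1) :
    dT + ∑' w, dw w ≤
      (κ + 1) * (trunc dT κ + ∑' w, trunc (dw w) κ) + κ ^ 2 + 2 * κ :=
  truncated_distance_sum_bound_general W dT dw κ hκ hdw hfin hcount
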